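/- Let V be a real vector space with a symmetric bilinear form (·,·), and let H, ω ∈ V with (H·H) > 0 and (ω·ω) > 0. Assume the restriction of the form to H^⊥ = {D : (D·H) = 0} is negative semi-definite. Write ω = pH + λ with p = (ω·H)/(H·H) and λ ∈ H^⊥, and suppose p ≠ 0. If C = xH + D with D ∈ H^⊥ satisfies (C·ω) = 0, then (C·C) ≤ ((ω·ω)(H·H)/(H·ω)²)·(D·D). -/
import Mathlib

set_option maxHeartbeats 800000


/-- Hodge-index type inequality: if the form is negative semi-definite on `H^⊥`,
`(H²), (ω²) > 0`, `ω = pH + λ` with `λ ∈ H^⊥`, `p ≠ 0`, and `C = xH + D` with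
`D ∈ H^⊥` satisfies `(C·ω) = 0`, then `(C²) ≤ ((ω²)(H²)/(H·ω)²)(D²)`. -/
theorem hodge_index_bound {V : Type*} [AddCommGroup V] [Module ℝ V]
    (B : V →ₗ[ℝ] V →ₗ[ℝ] ℝ) (hsymm : ∀ x y, B x y = B y x)
    (H ω : V) (hH : 0 < B H H) (hω : 0 < B ω ω)
    (hnsd : ∀ D : V, B D H = 0 → B D D ≤ 0)
    (p : ℝ) (hp : p = B ω H / B H H) (hpne : p ≠ 0)
    (hlam : B (ω - p • H) H = 0)
    (x : ℝ) (D : V) (hD : B D H = 0)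
    (C : V) (hC : C = x • H + D) (hCω : B C ω = 0) :
    B C C ≤ (B ω ω * B H H / (B H ω) ^ 2) * B D D := by
  set lam := ω - p • H with hlamdef
  have hωeq : ω = p • H + lam := by rw [hlamdef]; abel
  set a := B H H with ha
  set d := B D D with hd
  set l := B lam lam with hl
  set m := B D lam with hm
  -- basic identities
  have hωH : B ω H = p * a := by
    rw [hp]; field_simp
  have hHω : B H ω = p * a := by rw [hsymm]; exact hωH
  have hHlam : B H lam = 0 := by rw [hsymm]; exact hlam
  have hDω : B D ω = m := by
    rw [hωeq]
    simp [map_add, map_smul, hD, hm]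
  have hωω : B ω ω = p ^ 2 * a + l := by
    conv_lhs => rw [hωeq]
    simp [map_add, map_smul, hHlam, hlam, hl, ha]
    ring
  have hHD : B H D = 0 := by rw [hsymm]; exact hD
  have hCωx : x * (p * a) + m = 0 := by
    rw [← hCω, hC]
    simp [map_add, map_smul, hHω, hDω]
  have hCC : B C C = x ^ 2 * a + d := by
    rw [hC]
    simp [map_add, map_smul, hHD, hD, ha, hd]
    ring
  -- Cauchy–Schwarz on the negative semidefinite subspace
  have hCS : m ^ 2 ≤ d * l := by
    have key : ∀ t : ℝ, 0 ≤ (-l) * (t * t) + (-(2 * m)) * t + (-d) := by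
      intro t
      have h1 : B (D + t • lam) H = 0 := by
        simp [map_add, map_smul, hD, hlam]
      have h2 := hnsd _ h1
      have : B (D + t • lam) (D + t • lam)
          = d + 2 * m * t + l * t ^ 2 := by
        simp [map_add, map_smul, hd, hm, hl, hsymm lam D]
        ring
      rw [this] at h2
      nlinarith
    have hdisc : discrim (-l) (-(2*m)) (-d) ≤ 0 := discrim_le_zero key
    rw [discrim] at hdisc
    nlinarith
  have hdle : d ≤ 0 := hnsd D hD
  have hlle : l ≤ 0 := hnsd lam hlam
  have hane : a ≠ 0 := ne_of_gt hH
  have hpa : (0:ℝ) < p ^ 2 * a := by positivity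
  rw [hCC, hωω, hHω]
  rw [div_mul_eq_mul_div, le_div_iff₀ (by positivity)]
  have hx : x * (p * a) = -m := by linarith
  have hx2 : (x * (p * a)) ^ 2 = m ^ 2 := by rw [hx]; ring
  nlinarith [mul_le_mul_of_nonneg_left hCS (le_of_lt hH)]
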